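/- Every induced subgraph of a t-perfect finite simple graph is t-perfect. -/

import Mathlib

/-!
Incidence vectors of stable sets satisfy the box, edge and odd-cycle inequalities, so
`STAB(H) ⊆ TSTAB(H)` for every graph. Conversely, extend `x ∈ TSTAB(G[S])` by zero to `V`.
An induced odd cycle of `G` inside `S` is one of `G[S]`; one leaving `S` passes through a
zero coordinate, and the edge inequalities along the remaining even path already give the
odd-cycle bound. So the extension lies in `TSTAB(G) = STAB(G)`, and restricting a convex
combination of stable sets of `G` to `S` writes `x` as one of stable sets of `G[S]`.
-/

open Finset SimpleGraph

namespace TPerfection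

variable {V : Type*}

/-- A stable (independent) set of vertices: pairwise non-adjacent. -/
def IsStableSet (G : SimpleGraph V) (S : Finset V) : Prop :=
  ∀ u ∈ S, ∀ v ∈ S, ¬ G.Adj u v

/-- STAB(G): convex hull of incidence vectors of stable sets. -/
def stabPolytope (G : SimpleGraph V) [Fintype V] [DecidableEq V] : Set (V → ℝ) :=
  convexHull ℝ { x | ∃ S : Finset V, IsStableSet G S ∧ x = fun v => if v ∈ S then (1 : ℝ) else 0 }

/-- `c` is an induced (chordless) cycle of `G`. -/
def IsInducedCycle (G : SimpleGraph V) {u : V} (c : G.Walk u u) : Prop :=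
  c.IsCycle ∧ ∀ x y : V, x ∈ c.support → y ∈ c.support → G.Adj x y → s(x, y) ∈ c.edges

def boxConstraints (x : V → ℝ) : Prop := ∀ v, 0 ≤ x v ∧ x v ≤ 1

def edgeConstraints (G : SimpleGraph V) (x : V → ℝ) : Prop :=
  ∀ u v : V, G.Adj u v → x u + x v ≤ 1

def cliqueConstraints (G : SimpleGraph V) (x : V → ℝ) : Prop :=
  ∀ K : Finset V, G.IsClique (K : Set V) → ∑ v ∈ K, x v ≤ 1

def oddCycleConstraints [DecidableEq V] (G : SimpleGraph V) (x : V → ℝ) : Prop :=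
  ∀ (u : V) (c : G.Walk u u), IsInducedCycle G c → Odd c.length →
    ∑ v ∈ c.support.toFinset, x v ≤ ((c.length : ℝ) - 1) / 2

/-- Solution set of box, edge and odd-cycle constraints. -/
def tPolytope (G : SimpleGraph V) [DecidableEq V] : Set (V → ℝ) :=
  { x | boxConstraints x ∧ edgeConstraints G x ∧ oddCycleConstraints G x }

/-- Solution set of box, clique and odd-cycle constraints. -/
def hPolytope (G : SimpleGraph V) [DecidableEq V] : Set (V → ℝ) :=
  { x | boxConstraints x ∧ cliqueConstraints G x ∧ oddCycleConstraints G x }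

/-- Solution set of box and clique constraints. -/
def qstabPolytope (G : SimpleGraph V) : Set (V → ℝ) :=
  { x | boxConstraints x ∧ cliqueConstraints G x }

def TPerfect (G : SimpleGraph V) [Fintype V] [DecidableEq V] : Prop :=
  tPolytope G = stabPolytope G

def HPerfect (G : SimpleGraph V) [Fintype V] [DecidableEq V] : Prop :=
  hPolytope G = stabPolytope G

/-- The clique number, as an extended natural number. -/
noncomputable def cliqueNumber (G : SimpleGraph V) : ℕ∞ :=
  sSup ((fun n : ℕ => (n : ℕ∞)) '' { n | ∃ K : Finset V, G.IsNClique n K })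

/-- A graph is perfect if every induced subgraph has chromatic number equal to
clique number. -/
def IsPerfect (G : SimpleGraph V) : Prop :=
  ∀ S : Set V, (G.induce S).chromaticNumber = cliqueNumber (G.induce S)

/-- `G` is a loose wheel with hub `hub` and rim `c`: `c` is a cycle, `hub` lies outside
of it and has at least three neighbours on it, and the rim together with the hub
comprise all vertices and edges of `G`. -/
structure IsLooseWheel (G : SimpleGraph V) (hub : V) {u : V} (c : G.Walk u u) : Prop where
  isCycle : c.IsCycle
  hub_not_mem : hub ∉ c.support
  spokes : ∃ w₁ w₂ w₃ : V, w₁ ∈ c.support ∧ w₂ ∈ c.support ∧ w₃ ∈ c.support ∧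
    w₁ ≠ w₂ ∧ w₁ ≠ w₃ ∧ w₂ ≠ w₃ ∧ G.Adj hub w₁ ∧ G.Adj hub w₂ ∧ G.Adj hub w₃
  vertex_cover : ∀ w : V, w ∈ c.support ∨ w = hub
  edge_cover : ∀ x y : V, G.Adj x y → s(x, y) ∈ c.edges ∨ x = hub ∨ y = hub

/-- A segment of a loose wheel: a path of the rim joining two neighbours of the hub
and containing no other neighbour of the hub. -/
def IsSegment (G : SimpleGraph V) (hub : V) {u : V} (c : G.Walk u u)
    {a b : V} (p : G.Walk a b) : Prop :=
  p.IsPath ∧ a ≠ b ∧ G.Adj hub a ∧ G.Adj hub b ∧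
    (∀ e ∈ p.edges, e ∈ c.edges) ∧
    (∀ w ∈ p.support, G.Adj hub w → w = a ∨ w = b)

/-- `G` is a loose odd wheel: a loose wheel with odd rim having at least three
(pairwise distinct, hence pairwise edge-disjoint) segments of odd length. -/
def IsLooseOddWheel [DecidableEq V] (G : SimpleGraph V) : Prop :=
  ∃ (hub u : V) (c : G.Walk u u), IsLooseWheel G hub c ∧ Odd c.length ∧
    ∃ (a₁ b₁ : V) (p₁ : G.Walk a₁ b₁) (a₂ b₂ : V) (p₂ : G.Walk a₂ b₂)
      (a₃ b₃ : V) (p₃ : G.Walk a₃ b₃),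
      IsSegment G hub c p₁ ∧ IsSegment G hub c p₂ ∧ IsSegment G hub c p₃ ∧
      Odd p₁.length ∧ Odd p₂.length ∧ Odd p₃.length ∧
      Disjoint p₁.edges.toFinset p₂.edges.toFinset ∧
      Disjoint p₁.edges.toFinset p₃.edges.toFinset ∧
      Disjoint p₂.edges.toFinset p₃.edges.toFinset

/-- The neighbourhood of `v` is a stable set. -/
def StableNeighborhood (G : SimpleGraph V) (v : V) : Prop :=
  ∀ x y : V, G.Adj v x → G.Adj v y → ¬ G.Adj x y

/-- The t-contraction of `G` at `v`: delete `{v} ∪ N(v)` and add a new vertex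
(`none`) adjacent exactly to the remaining vertices having a neighbour in `N(v)`. -/
def tContract (G : SimpleGraph V) (v : V) :
    SimpleGraph (Option { w : V // w ≠ v ∧ ¬ G.Adj v w }) where
  Adj x y :=
    match x, y with
    | none, none => False
    | none, some b => ∃ n, G.Adj v n ∧ G.Adj b.1 n
    | some a, none => ∃ n, G.Adj v n ∧ G.Adj a.1 n
    | some a, some b => G.Adj a.1 b.1
  symm := by
    constructor
    rintro (_ | a) (_ | b) h
    · exact h
    · exact h
    · exact h
    · exact h.symm
  loopless := by
    constructor
    rintro (_ | a) h
    · exact h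
    · exact G.loopless.irrefl _ h

/-- The wheel with hub `none` and rim the cycle of length `k` on `Fin k`. -/
def wheelGraph (k : ℕ) : SimpleGraph (Option (Fin k)) where
  Adj x y :=
    match x, y with
    | none, none => False
    | none, some _ => True
    | some _, none => True
    | some i, some j => i ≠ j ∧ ((i.1 + 1) % k = j.1 ∨ (j.1 + 1) % k = i.1)
  symm := by
    constructor
    rintro (_ | i) (_ | j) h
    · exact h
    · trivial
    · trivial
    · exact ⟨h.1.symm, h.2.symm⟩
  loopless := by
    constructor
    rintro (_ | i) h
    · exact h
    · exact h.1 rfl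

/-- One step of t-contraction between (isomorphism classes of) graphs. -/
def TContractStep : (Σ α : Type, SimpleGraph α) → (Σ α : Type, SimpleGraph α) → Prop :=
  fun G H => ∃ v : G.1, StableNeighborhood G.2 v ∧ Nonempty (H.2 ≃g tContract G.2 v)

theorem sum_toFinset_map_of_injective {α β M : Type*} [DecidableEq α] [DecidableEq β]
    [AddCommMonoid M] {f : α → β} (hf : Function.Injective f) (l : List α) (y : β → M) :
    ∑ b ∈ (l.map f).toFinset, y b = ∑ a ∈ l.toFinset, y (f a) := by
  have himage : (l.map f).toFinset = l.toFinset.image f := by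
    ext; simp
  rw [himage, Finset.sum_image fun a _ b _ hab => hf hab]

section

variable {G : SimpleGraph V}

theorem two_mul_sum_support_le_length {y : V → ℝ} (hy : edgeConstraints G y) :
    ∀ {a b : V} (q : G.Walk a b), y b = 0 → Even q.length →
      2 * (q.support.map y).sum ≤ q.length
  | _, _, .nil, hb, _ => by simp [hb]
  | _, _, .cons _ .nil, _, hev => by simp at hev
  | _, _, .cons h (.cons _ q), hb, hev => by
      have ih := two_mul_sum_support_le_length hy q hb (by simpa [Nat.even_add_one] using hev)
      have hab := hy _ _ h
      simp only [Walk.support_cons, List.map_cons, List.sum_cons, Walk.length_cons]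
      push_cast
      linarith

/-- Rotating the cycle to start at `w` leaves a path of even length `c.length - 1` ending
at `w`; its vertices other than `w` are covered by `(c.length - 1) / 2` edges. -/
theorem sum_le_of_isCycle_of_eq_zero [DecidableEq V] {y : V → ℝ} (hy : edgeConstraints G y)
    {u : V} {c : G.Walk u u} (hc : c.IsCycle) (hodd : Odd c.length)
    {w : V} (hw : w ∈ c.support) (hyw : y w = 0) :
    ∑ v ∈ c.support.toFinset, y v ≤ ((c.length : ℝ) - 1) / 2 := by
  obtain ⟨v, h, q, hq⟩ := Walk.not_nil_iff.mp ((Walk.nil_rotate hw).not.mpr hc.not_nil)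
  have hsupp : c.support.toFinset = q.support.toFinset := by
    ext v
    simp only [List.mem_toFinset, ← Walk.mem_support_rotate_iff c w hw, hq, Walk.support_cons,
      List.mem_cons, or_iff_right_iff_imp]
    rintro rfl
    exact q.end_mem_support
  have hpath : q.IsPath := ((Walk.cons_isCycle_iff q h).mp (hq ▸ hc.rotate hw)).1
  have hlen : q.length + 1 = c.length := by
    rw [← Walk.length_rotate c w hw, hq, Walk.length_cons]
  have hbound := two_mul_sum_support_le_length hy q hyw (by grind)
  rw [hsupp, List.sum_toFinset y hpath.support_nodup, ← hlen]
  push_cast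
  linarith

theorem convex_tPolytope [DecidableEq V] : Convex ℝ (tPolytope G) := by
  intro p hp q hq a b ha hb hab
  have halfspace_le : ∀ (f : (V → ℝ) → ℝ), IsLinearMap ℝ f → ∀ r : ℝ,
      f p ≤ r → f q ≤ r → f (a • p + b • q) ≤ r :=
    fun f hf r hfp hfq => convex_halfSpace_le hf r hfp hfq ha hb hab
  refine ⟨fun v => ⟨?_, ?_⟩, fun u v huv => ?_, fun u c hc hodd => ?_⟩
  · exact convex_halfSpace_ge (f := fun x : V → ℝ => x v) (LinearMap.proj v).isLinear 0
      (hp.1 v).1 (hq.1 v).1 ha hb hab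
  · exact halfspace_le (fun x => x v) (LinearMap.proj v).isLinear 1 (hp.1 v).2 (hq.1 v).2
  · exact halfspace_le (fun x => x u + x v)
      ⟨fun _ _ => add_add_add_comm .., fun _ _ => (mul_add ..).symm⟩ 1
      (hp.2.1 u v huv) (hq.2.1 u v huv)
  · exact halfspace_le (fun x => ∑ v ∈ c.support.toFinset, x v)
      ⟨fun _ _ => Finset.sum_add_distrib, fun _ _ => (Finset.mul_sum ..).symm⟩ _
      (hp.2.2 u c hc hodd) (hq.2.2 u c hc hodd)

theorem indicator_mem_tPolytope [DecidableEq V] {T : Finset V} (hT : IsStableSet G T) :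
    (fun v => if v ∈ T then (1 : ℝ) else 0) ∈ tPolytope G := by
  have hedge : edgeConstraints G (fun v => if v ∈ T then (1 : ℝ) else 0) := by
    intro u v huv
    by_cases hu : u ∈ T <;> by_cases hv : v ∈ T
    · exact absurd huv (hT u hu v hv)
    all_goals simp [hu, hv]
  refine ⟨fun v => by beta_reduce; split_ifs <;> norm_num, hedge, fun u c hc hodd => ?_⟩
  have hadj : G.Adj u c.snd := Walk.adj_snd hc.1.not_nil
  by_cases hu : u ∈ T
  · have hsnd : c.snd ∉ T := fun hs => hT u hu _ hs hadj
    exact sum_le_of_isCycle_of_eq_zero hedge hc.1 hodd (c.getVert_mem_support 1) (by simp [hsnd])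
  · exact sum_le_of_isCycle_of_eq_zero hedge hc.1 hodd c.start_mem_support (by simp [hu])

theorem stabPolytope_subset_tPolytope [Fintype V] [DecidableEq V] :
    stabPolytope G ⊆ tPolytope G :=
  convexHull_min (by rintro _ ⟨T, hT, rfl⟩; exact indicator_mem_tPolytope hT) convex_tPolytope

theorem IsInducedCycle.of_map {W : Type*} {H : SimpleGraph W}
    (f : H ↪g G) {u : W} {c : H.Walk u u} (hc : IsInducedCycle G (c.map f.toHom)) :
    IsInducedCycle H c := by
  refine ⟨(Walk.isCycle_map_iff_of_injective f.injective).mp hc.1, fun x y hx hy hxy => ?_⟩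
  have hmem := hc.2 (f x) (f y) (by simp [Walk.support_map, hx]) (by simp [Walk.support_map, hy])
    (f.map_adj_iff.mpr hxy)
  rw [Walk.edges_map] at hmem
  exact (List.mem_map_of_injective (Sym2.map.injective f.injective)).mp hmem

variable {S : Set V}

theorem extend_mem_tPolytope [DecidableEq V] {x : S → ℝ} (hx : x ∈ tPolytope (G.induce S)) :
    Function.extend ((↑) : S → V) x (0 : V → ℝ) ∈ tPolytope G := by
  set y := Function.extend ((↑) : S → V) x (0 : V → ℝ)
  have hy_mem : ∀ v : S, y v = x v := Subtype.val_injective.extend_apply x 0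
  have hy_not_mem : ∀ v ∉ S, y v = 0 := fun v hv =>
    Function.extend_apply' x (0 : V → ℝ) v fun ⟨a, ha⟩ => hv (ha ▸ a.2)
  have hbox : boxConstraints y := by
    intro v
    by_cases hv : v ∈ S
    · exact hy_mem ⟨v, hv⟩ ▸ hx.1 ⟨v, hv⟩
    · simp [hy_not_mem v hv]
  have hedge : edgeConstraints G y := by
    intro u v huv
    by_cases hu : u ∈ S
    · by_cases hv : v ∈ S
      · rw [hy_mem ⟨u, hu⟩, hy_mem ⟨v, hv⟩]
        exact hx.2.1 ⟨u, hu⟩ ⟨v, hv⟩ huv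
      · linarith [hy_not_mem v hv, (hbox u).2]
    · linarith [hy_not_mem u hu, (hbox v).2]
  refine ⟨hbox, hedge, fun u c hc hodd => ?_⟩
  by_cases hcS : ∀ v ∈ c.support, v ∈ S
  · have hmap := c.map_induce hcS
    have hind : IsInducedCycle (G.induce S) (c.induce S hcS) :=
      .of_map (Embedding.induce S) (by rwa [hmap])
    have hlen : (c.induce S hcS).length = c.length :=
      (Walk.length_map _ _).symm.trans (congrArg Walk.length hmap)
    have hsupp : (c.induce S hcS).support.map (↑) = c.support :=
      (Walk.support_map _ _).symm.trans (congrArg Walk.support hmap)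
    rw [← hsupp, sum_toFinset_map_of_injective Subtype.val_injective, ← hlen]
    simpa [hy_mem] using hx.2.2 _ _ hind (hlen ▸ hodd)
  · push Not at hcS
    obtain ⟨w, hw, hwS⟩ := hcS
    exact sum_le_of_isCycle_of_eq_zero hedge hc.1 hodd hw (hy_not_mem w hwS)

theorem comp_val_mem_stabPolytope [Fintype V] [DecidableEq V] [Fintype S] {y : V → ℝ}
    (hy : y ∈ stabPolytope G) : y ∘ ((↑) : S → V) ∈ stabPolytope (G.induce S) := by
  have himage := Set.mem_image_of_mem (LinearMap.funLeft ℝ ℝ ((↑) : S → V)) hy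
  rw [stabPolytope, LinearMap.image_convexHull] at himage
  refine convexHull_mono ?_ himage
  rintro _ ⟨_, ⟨T, hT, rfl⟩, rfl⟩
  refine ⟨univ.filter fun v : S => ↑v ∈ T, fun a ha b hb => ?_, ?_⟩
  · simp only [mem_filter, mem_univ, true_and] at ha hb
    exact hT a ha b hb
  · ext v
    simp [LinearMap.funLeft]

end

/-- Every induced subgraph of a t-perfect finite simple graph is
t-perfect. -/
theorem tPerfect_induce {V : Type*} [Fintype V] [DecidableEq V] (G : SimpleGraph V)
    (h : TPerfect G) (S : Set V) [Fintype S] :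
    TPerfect (G.induce S) := by
  refine Set.Subset.antisymm (fun x hx => ?_) stabPolytope_subset_tPolytope
  have hy : Function.extend ((↑) : S → V) x (0 : V → ℝ) ∈ stabPolytope G :=
    h ▸ extend_mem_tPolytope hx
  simpa [Subtype.val_injective.extend_comp] using comp_val_mem_stabPolytope (S := S) hy

end TPerfection
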